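/- Product formula for cosh: for all complex x, cosh(x/2) = ∏_{k=1}^∞ (1 + (x/(2π(k-1/2)))²), where the infinite product converges. -/

import Mathlib

/-!
Euler's sine product at `2z` splits by parity of the index: the first `2n` factors of the product for
`sin (2πz)` are the first `n` factors of the product for `sin (πz)` (the even indices) times
the first `n` factors `1 - 4z²/(2k+1)²` (the odd indices). Since `sin (2πz) = 2 sin (πz) cos (πz)`,
the odd product converges to `cos (πz)` wherever `sin (πz) ≠ 0`. The odd product converges
locally uniformly, so it is continuous in `z`, and the identity extends across the integers by
density. The theorem is the case `z = i x / (2π)`.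
-/

open Filter Finset Complex
open scoped Real Topology

noncomputable abbrev cosineTerm (z : ℂ) (n : ℕ) : ℂ := -(2 * z) ^ 2 / (2 * n + 1) ^ 2

lemma norm_cosineTerm_le {z : ℂ} {R : ℝ} (hz : ‖z‖ ≤ R) (n : ℕ) :
    ‖cosineTerm z n‖ ≤ (2 * R) ^ 2 / ((n : ℝ) + 1) ^ 2 := by
  have hodd : ‖2 * (n : ℂ) + 1‖ = 2 * n + 1 := by exact_mod_cast norm_natCast (2 * n + 1)
  rw [norm_div, norm_neg, norm_pow, norm_pow, norm_mul, Complex.norm_two, hodd]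
  gcongr
  linarith [(n.cast_nonneg : (0 : ℝ) ≤ n)]

lemma summable_div_nat_add_one_sq (c : ℝ) : Summable fun n : ℕ => c / ((n : ℝ) + 1) ^ 2 := by
  have := ((summable_nat_add_iff 1).2 (Real.summable_one_div_nat_pow.2 one_lt_two)).mul_left c
  simpa only [Nat.cast_add, Nat.cast_one, mul_one_div] using this

lemma multipliable_cosineTerm (z : ℂ) : Multipliable fun n => 1 + cosineTerm z n :=
  multipliable_one_add_of_summable <|
    (summable_div_nat_add_one_sq _).of_nonneg_of_le (fun _ => norm_nonneg _)
      (norm_cosineTerm_le le_rfl)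

lemma continuous_tprod_cosineTerm : Continuous fun z => ∏' n, (1 + cosineTerm z n) := by
  refine continuous_iff_continuousAt.2 fun z => ?_
  have hbound : ∀ w ∈ Metric.closedBall z 1, ‖w‖ ≤ ‖z‖ + 1 := fun w hw => by
    rw [Metric.mem_closedBall, dist_eq_norm] at hw
    linarith [norm_le_norm_add_norm_sub' w z]
  have hunif := Summable.hasProdUniformlyOn_nat_one_add (isCompact_closedBall z 1)
    (summable_div_nat_add_one_sq _)
    (Eventually.of_forall fun n w hw => norm_cosineTerm_le (hbound w hw) n)
    (fun n => by fun_prop)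
  exact (hunif.tendstoUniformlyOn_finsetRange.continuousOn
    (Frequently.of_forall fun n => by fun_prop)).continuousAt
      (Metric.closedBall_mem_nhds z one_pos)

lemma euler_sin_prod_two_mul (z : ℂ) (n : ℕ) :
    π * (2 * z) * ∏ j ∈ range (2 * n), (1 - (2 * z) ^ 2 / ((j : ℂ) + 1) ^ 2)
      = 2 * (π * z * ∏ j ∈ range n, (1 - z ^ 2 / ((j : ℂ) + 1) ^ 2)) *
          ∏ j ∈ range n, (1 + cosineTerm z j) := by
  induction n with
  | zero => rw [Nat.mul_zero, prod_range_zero, prod_range_zero, prod_range_zero]; ring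
  | succ n ih =>
    have hfactors : (1 - (2 * z) ^ 2 / (((2 * n : ℕ) : ℂ) + 1) ^ 2) *
        (1 - (2 * z) ^ 2 / (((2 * n + 1 : ℕ) : ℂ) + 1) ^ 2)
        = (1 - z ^ 2 / ((n : ℂ) + 1) ^ 2) * (1 + cosineTerm z n) := by
      have hodd : (2 * (n : ℂ) + 1) ≠ 0 := by exact_mod_cast (by omega : 2 * n + 1 ≠ 0)
      have heven : ((n : ℂ) + 1) ≠ 0 := Nat.cast_add_one_ne_zero n
      push_cast
      rw [show 2 * (n : ℂ) + 1 + 1 = 2 * (n + 1) by ring]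
      field_simp
      ring
    calc _ = (π * (2 * z) * ∏ j ∈ range (2 * n), (1 - (2 * z) ^ 2 / ((j : ℂ) + 1) ^ 2)) *
          ((1 - (2 * z) ^ 2 / (((2 * n : ℕ) : ℂ) + 1) ^ 2) *
            (1 - (2 * z) ^ 2 / (((2 * n + 1 : ℕ) : ℂ) + 1) ^ 2)) := by
          rw [Nat.mul_succ, prod_range_succ, prod_range_succ]; ring
      _ = _ := by rw [ih, hfactors, prod_range_succ, prod_range_succ]; ring

lemma euler_cosineTerm_tprod_of_sin_ne_zero {z : ℂ} (hz : sin (π * z) ≠ 0) :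
    ∏' n, (1 + cosineTerm z n) = cos (π * z) := by
  have hdouble : Tendsto (fun n : ℕ => π * (2 * z) *
      ∏ j ∈ range (2 * n), (1 - (2 * z) ^ 2 / ((j : ℂ) + 1) ^ 2)) atTop (𝓝 (sin (π * (2 * z)))) :=
    (tendsto_euler_sin_prod (2 * z)).comp (tendsto_id.const_mul_atTop' two_pos)
  have hsplit : Tendsto (fun n : ℕ => π * (2 * z) *
      ∏ j ∈ range (2 * n), (1 - (2 * z) ^ 2 / ((j : ℂ) + 1) ^ 2)) atTop
      (𝓝 (2 * sin (π * z) * ∏' n, (1 + cosineTerm z n))) := by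
    simp_rw [euler_sin_prod_two_mul]
    exact ((tendsto_euler_sin_prod z).const_mul 2).mul
      (multipliable_cosineTerm z).hasProd.tendsto_prod_nat
  have h := tendsto_nhds_unique hsplit hdouble
  rw [mul_left_comm, sin_two_mul] at h
  exact mul_left_cancel₀ (mul_ne_zero two_ne_zero hz) h

lemma dense_setOf_sin_pi_mul_ne_zero : Dense {z : ℂ | sin (π * z) ≠ 0} :=
  ((Set.countable_range ((↑) : ℤ → ℂ)).dense_compl ℂ).mono fun _ hz => sin_pi_mul_ne_zero hz

theorem euler_cosineTerm_tprod (z : ℂ) : ∏' n, (1 + cosineTerm z n) = cos (π * z) :=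
  congrFun (continuous_tprod_cosineTerm.ext_on dense_setOf_sin_pi_mul_ne_zero
    (by fun_prop) fun _ hz => euler_cosineTerm_tprod_of_sin_ne_zero hz) z

/-- Product formula for `cosh`: for all complex `x`,
`cosh(x/2) = ∏_{k=1}^∞ (1 + (x/(2π(k-1/2)))²)`, the infinite product converging. -/
theorem cosh_product (x : ℂ) :
    Multipliable (fun k : ℕ => 1 + (x / (2 * (Real.pi : ℂ) * ((k : ℂ) + 1 / 2))) ^ 2) ∧
    Complex.cosh (x / 2)
      = ∏' k : ℕ, (1 + (x / (2 * (Real.pi : ℂ) * ((k : ℂ) + 1 / 2))) ^ 2) := by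
  set z := x * I / (2 * π) with hz
  have hπ : (π : ℂ) ≠ 0 := ofReal_ne_zero.2 Real.pi_ne_zero
  have hterms : (fun k : ℕ => 1 + (x / (2 * (π : ℂ) * ((k : ℂ) + 1 / 2))) ^ 2)
      = fun k => 1 + cosineTerm z k := by
    ext k
    have hk : (2 * (k : ℂ) + 1) ≠ 0 := by exact_mod_cast (by omega : 2 * k + 1 ≠ 0)
    rw [hz]
    field_simp
    rw [I_sq]
    ring
  have hcosh : cosh (x / 2) = cos (π * z) := by
    rw [← cos_mul_I, hz]
    congr 1
    field_simp
  rw [hterms, hcosh]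
  exact ⟨multipliable_cosineTerm z, (euler_cosineTerm_tprod z).symm⟩
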